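/- Theorem (right S-resolvent equation): Let V be a two-sided quaternionic Banach space, let T ∈ B(V) and let s ∈ ρ_S(T). Then the right S-resolvent operator satisfies (sℐ) ∘ S_R^{-1}(s,T) − S_R^{-1}(s,T) ∘ T = ℐ in B(V). -/

import Mathlib

/-! With `A = T - s̄ℐ` one has `A T - (sℐ) A = Q_s(T)`, because `s + s̄ = 2 Re(s)` and
`s s̄ = |s|²` act on `V` as real scalars. Since `Q_s(T)` is a polynomial in `T`, its inverse
commutes with `T`, so `(sℐ) S_R^{-1}(s,T) - S_R^{-1}(s,T) T = (A T - (sℐ) A) Q_s(T)⁻¹ = ℐ`. -/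

/- Setting: a two-sided quaternionic Banach space `V`, i.e. a real Banach space with
commuting left and right `ℍ`-module structures (the right structure is encoded as a
module structure over `ℍᵐᵒᵖ`), both compatible with the real structure and with
continuous (bounded) scalar multiplications.  `B(V)` is the ring `V →L[ℍᵐᵒᵖ] V` of
bounded right-linear operators on `V`. -/

open Quaternion MulOpposite

variable {V : Type*} [NormedAddCommGroup V] [NormedSpace ℝ V] [CompleteSpace V]
  [Module ℍ[ℝ] V] [Module ℍ[ℝ]ᵐᵒᵖ V]
  [IsScalarTower ℝ ℍ[ℝ] V] [IsScalarTower ℝ ℍ[ℝ]ᵐᵒᵖ V]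
  [SMulCommClass ℍ[ℝ] ℍ[ℝ]ᵐᵒᵖ V]
  [ContinuousConstSMul ℍ[ℝ] V] [ContinuousConstSMul ℍ[ℝ]ᵐᵒᵖ V]

/-- For `a ∈ ℍ`, the operator `aℐ : v ↦ a • v`, which is right-linear since the two
module structures commute. -/
noncomputable def lMulOp (a : ℍ[ℝ]) : V →L[ℍ[ℝ]ᵐᵒᵖ] V :=
  { toFun := fun v => a • v
    map_add' := fun u v => smul_add a u v
    map_smul' := fun b v => smul_comm a b v
    cont := continuous_const_smul a }

/-- `Q_s(T) = T² − 2 Re(s) T + |s|² ℐ`. -/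
noncomputable def Qs (T : V →L[ℍ[ℝ]ᵐᵒᵖ] V) (s : ℍ[ℝ]) : V →L[ℍ[ℝ]ᵐᵒᵖ] V :=
  T * T - (2 * s.re) • T + (‖s‖ ^ 2) • 1

/-- The right `S`-resolvent operator `S_R^{-1}(s,T) = −(T − s̄ℐ) Q_s(T)⁻¹`. -/
noncomputable def SRinv (T : V →L[ℍ[ℝ]ᵐᵒᵖ] V) (s : ℍ[ℝ]) : V →L[ℍ[ℝ]ᵐᵒᵖ] V :=
  -((T - lMulOp (star s)) * Ring.inverse (Qs T s))

theorem Commute.ring_inverse_right {M₀ : Type*} [MonoidWithZero M₀] {a q : M₀}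
    (h : Commute a q) : Commute a (Ring.inverse q) := by
  by_cases hq : IsUnit q
  · obtain ⟨u, rfl⟩ := hq
    rw [Ring.inverse_unit]
    exact h.units_inv_right
  · rw [Ring.inverse_non_unit q hq]
    exact Commute.zero_right a

theorem mul_neg_inverse_sub_eq_one {R : Type*} [Ring R] {a b c q : R} (hq : IsUnit q)
    (hcomm : Commute a q) (h : b * a - c * b = q) :
    c * -(b * Ring.inverse q) - -(b * Ring.inverse q) * a = 1 := by
  calc c * -(b * Ring.inverse q) - -(b * Ring.inverse q) * a
      = b * (Ring.inverse q * a) - c * b * Ring.inverse q := by noncomm_ring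
    _ = (b * a - c * b) * Ring.inverse q := by
        rw [← hcomm.ring_inverse_right.eq]; noncomm_ring
    _ = 1 := by rw [h, Ring.mul_inverse_cancel q hq]

theorem commute_Qs {E : Type*} [NormedAddCommGroup E] [NormedSpace ℝ E] [Module ℍ[ℝ]ᵐᵒᵖ E]
    [IsScalarTower ℝ ℍ[ℝ]ᵐᵒᵖ E] (T : E →L[ℍ[ℝ]ᵐᵒᵖ] E) (s : ℍ[ℝ]) : Commute T (Qs T s) :=
  (((Commute.refl T).mul_right (Commute.refl T)).sub_right
    ((Commute.refl T).smul_right _)).add_right ((Commute.one_right T).smul_right _)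

section Operators

variable {E : Type*} [NormedAddCommGroup E] [Module ℍ[ℝ] E] [Module ℍ[ℝ]ᵐᵒᵖ E]
  [SMulCommClass ℍ[ℝ] ℍ[ℝ]ᵐᵒᵖ E] [ContinuousConstSMul ℍ[ℝ] E]

theorem lMulOp_add (a b : ℍ[ℝ]) :
    (lMulOp (a + b) : E →L[ℍ[ℝ]ᵐᵒᵖ] E) = lMulOp a + lMulOp b := by
  ext v; exact add_smul a b v

theorem lMulOp_mul (a b : ℍ[ℝ]) :
    (lMulOp (a * b) : E →L[ℍ[ℝ]ᵐᵒᵖ] E) = lMulOp a * lMulOp b := by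
  ext v; exact mul_smul a b v

variable [NormedSpace ℝ E] [IsScalarTower ℝ ℍ[ℝ] E] [IsScalarTower ℝ ℍ[ℝ]ᵐᵒᵖ E]

theorem lMulOp_coe (r : ℝ) : (lMulOp (r : ℍ[ℝ]) : E →L[ℍ[ℝ]ᵐᵒᵖ] E) = r • 1 := by
  ext v; exact algebraMap_smul ℍ[ℝ] r v

theorem sub_lMulOp_star_mul_sub_eq_Qs (T : E →L[ℍ[ℝ]ᵐᵒᵖ] E) (s : ℍ[ℝ]) :
    (T - lMulOp (star s)) * T - lMulOp s * (T - lMulOp (star s)) = Qs T s := by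
  have hre : lMulOp (star s) * T + lMulOp s * T = (2 * s.re) • T := by
    rw [← add_mul, ← lMulOp_add, star_add_self', lMulOp_coe, smul_one_mul]
  have hnorm : lMulOp s * lMulOp (star s) = (‖s‖ ^ 2) • (1 : E →L[ℍ[ℝ]ᵐᵒᵖ] E) := by
    rw [← lMulOp_mul, self_mul_star, lMulOp_coe, normSq_eq_norm_mul_self, sq]
  rw [Qs, ← hre, ← hnorm, sub_mul, mul_sub]
  abel

end Operators

/-- **The right S-resolvent equation**: if `s ∈ ρ_S(T)` (i.e. `Q_s(T)` is invertible in
`B(V)`), then `(sℐ) ∘ S_R^{-1}(s,T) − S_R^{-1}(s,T) ∘ T = ℐ`. -/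
theorem right_S_resolvent_equation (T : V →L[ℍ[ℝ]ᵐᵒᵖ] V) (s : ℍ[ℝ])
    (hs : IsUnit (Qs T s)) :
    lMulOp s * SRinv T s - SRinv T s * T = 1 :=
  mul_neg_inverse_sub_eq_one hs (commute_Qs T s) (sub_lMulOp_star_mul_sub_eq_Qs T s)
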